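/- Let G be a group with subgroup H, R a normed ring, M a finitely generated projective RG-module with filling norm ‖·‖_M (as RG-module), and N a finitely generated RH-module with filling norm ‖·‖_N which is an internal direct summand of M as an RH-module. Then ‖·‖_N and the restriction of ‖·‖_M to N are equivalent. -/

import Mathlib

variable {R : Type*} [Ring R]

/-- The ℓ¹-norm on a group ring `MonoidAlgebra R Γ` induced by the free `R`-basis `Γ`. -/
noncomputable def l1GroupRing {Γ : Type*} (ν : RingNorm R) (a : MonoidAlgebra R Γ) : ℝ :=
  a.coeff.sum fun _ r => ν r

/-- The ℓ¹-norm on the finitely generated based free module `Λ → MonoidAlgebra R Γ`. -/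
noncomputable def l1Free {Γ Λ : Type*} [Fintype Λ] (ν : RingNorm R)
    (x : Λ → MonoidAlgebra R Γ) : ℝ :=
  ∑ i, l1GroupRing ν (x i)

/-- The filling norm on a `MonoidAlgebra R Γ`-module `P` induced by a surjection from a
finitely generated based free module. -/
noncomputable def fillingNorm {Γ : Type*} [Monoid Γ] {Λ : Type*} [Fintype Λ]
    {P : Type*} [AddCommGroup P] [Module (MonoidAlgebra R Γ) P] (ν : RingNorm R)
    (ρ : (Λ → MonoidAlgebra R Γ) →ₗ[MonoidAlgebra R Γ] P) (p : P) : ℝ :=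
  sInf {c : ℝ | ∃ x, ρ x = p ∧ l1Free ν x = c}


/-!
The inequality `‖n‖_M ≤ C ‖n‖_N` holds for any semilinear map between modules with filling norms:
lift the images of the free generators once and for all.

For the converse, `M` is projective, so `ρM` has a linear section `s`, and `‖s m‖₁ ≤ K ‖m‖_M`.
Since `N` is finitely generated over `R[H]`, the coefficients of `s n`, `n ∈ N`, are supported in
a fixed finite set of right cosets `H q`. On such elements `R[G]` is the free left `R[H]`-module on
the representatives `q.out`, with the same `ℓ¹`-norm, so applying the projection `M → N` along
`N'` to `n = ρM (s n)` expresses `n` through finitely many fixed elements of `N` with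
coefficients of total norm `‖s n‖₁`.
-/

open MonoidAlgebra QuotientGroup

section L1

variable {Γ : Type*} (ν : RingNorm R)

theorem l1GroupRing_eq_sum (a : MonoidAlgebra R Γ) :
    l1GroupRing ν a = ∑ g ∈ a.coeff.support, ν (a.coeff g) := rfl

theorem l1GroupRing_eq_sum_of_support_subset {a : MonoidAlgebra R Γ} {S : Finset Γ}
    (h : a.coeff.support ⊆ S) : l1GroupRing ν a = ∑ g ∈ S, ν (a.coeff g) :=
  Finset.sum_subset h fun g _ hg => by simp [Finsupp.notMem_support_iff.mp hg]

theorem l1GroupRing_nonneg (a : MonoidAlgebra R Γ) : 0 ≤ l1GroupRing ν a :=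
  Finset.sum_nonneg fun _ _ => apply_nonneg ν _

@[simp]
theorem l1GroupRing_zero : l1GroupRing ν (0 : MonoidAlgebra R Γ) = 0 := by
  simp [l1GroupRing]

@[simp]
theorem l1GroupRing_single (g : Γ) (r : R) : l1GroupRing ν (single g r) = ν r :=
  Finsupp.sum_single_index (map_zero ν)

theorem l1GroupRing_add_le (a b : MonoidAlgebra R Γ) :
    l1GroupRing ν (a + b) ≤ l1GroupRing ν a + l1GroupRing ν b := by
  classical
  let S := a.coeff.support ∪ b.coeff.support
  rw [l1GroupRing_eq_sum_of_support_subset ν (a := a + b) (S := S) Finsupp.support_add,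
    l1GroupRing_eq_sum_of_support_subset ν (S := S) Finset.subset_union_left,
    l1GroupRing_eq_sum_of_support_subset ν (S := S) Finset.subset_union_right,
    ← Finset.sum_add_distrib]
  exact Finset.sum_le_sum fun g _ => map_add_le_add ν _ _

theorem l1GroupRing_sum_le {ι : Type*} (s : Finset ι) (f : ι → MonoidAlgebra R Γ) :
    l1GroupRing ν (∑ i ∈ s, f i) ≤ ∑ i ∈ s, l1GroupRing ν (f i) :=
  Finset.le_sum_of_subadditive _ (l1GroupRing_zero ν).le (l1GroupRing_add_le ν) s f

theorem l1GroupRing_mul_le [Mul Γ] (a b : MonoidAlgebra R Γ) :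
    l1GroupRing ν (a * b) ≤ l1GroupRing ν a * l1GroupRing ν b := by
  rw [MonoidAlgebra.mul_def, l1GroupRing_eq_sum ν a, Finsupp.sum, Finset.sum_mul]
  refine (l1GroupRing_sum_le ν _ _).trans (Finset.sum_le_sum fun g _ => ?_)
  rw [l1GroupRing_eq_sum ν b, Finsupp.sum, Finset.mul_sum]
  refine (l1GroupRing_sum_le ν _ _).trans (Finset.sum_le_sum fun g' _ => ?_)
  rw [l1GroupRing_single]
  exact map_mul_le_mul ν _ _

theorem l1GroupRing_mapDomain_le {Γ' : Type*} (f : Γ → Γ') (a : MonoidAlgebra R Γ) :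
    l1GroupRing ν (mapDomain f a) ≤ l1GroupRing ν a := by
  conv_lhs => rw [← sum_coeff_single a, mapDomain_sum]
  exact (l1GroupRing_sum_le ν _ _).trans_eq
    (Finset.sum_congr rfl fun g _ => by simp only [mapDomain_single, l1GroupRing_single])

variable {Λ : Type*} [Fintype Λ]

theorem l1Free_nonneg (x : Λ → MonoidAlgebra R Γ) : 0 ≤ l1Free ν x :=
  Finset.sum_nonneg fun _ _ => l1GroupRing_nonneg ν _

theorem l1GroupRing_le_l1Free (x : Λ → MonoidAlgebra R Γ) (i : Λ) :
    l1GroupRing ν (x i) ≤ l1Free ν x :=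
  Finset.single_le_sum (fun j _ => l1GroupRing_nonneg ν (x j)) (Finset.mem_univ i)

theorem l1Free_sum_le {ι : Type*} (s : Finset ι) (f : ι → Λ → MonoidAlgebra R Γ) :
    l1Free ν (∑ i ∈ s, f i) ≤ ∑ i ∈ s, l1Free ν (f i) := by
  rw [l1Free]
  simp_rw [Finset.sum_apply]
  exact (Finset.sum_le_sum fun i _ => l1GroupRing_sum_le ν _ _).trans_eq Finset.sum_comm

theorem l1Free_smul_le [Mul Γ] (a : MonoidAlgebra R Γ) (x : Λ → MonoidAlgebra R Γ) :
    l1Free ν (a • x) ≤ l1GroupRing ν a * l1Free ν x := by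
  rw [l1Free, l1Free, Finset.mul_sum]
  exact Finset.sum_le_sum fun i _ => l1GroupRing_mul_le ν a (x i)

theorem l1Free_sum_smul_le [Mul Γ] {J : Type*} [Fintype J] (c : J → MonoidAlgebra R Γ)
    (v : J → Λ → MonoidAlgebra R Γ) {B : ℝ} (hB : ∀ j, l1GroupRing ν (c j) ≤ B) :
    l1Free ν (∑ j, c j • v j) ≤ (∑ j, l1Free ν (v j)) * B := by
  rw [Finset.sum_mul]
  refine (l1Free_sum_le ν _ _).trans (Finset.sum_le_sum fun j _ => ?_)
  calc l1Free ν (c j • v j) ≤ l1GroupRing ν (c j) * l1Free ν (v j) := l1Free_smul_le ν _ _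
    _ ≤ l1Free ν (v j) * B := by
      rw [mul_comm]; exact mul_le_mul_of_nonneg_left (hB j) (l1Free_nonneg ν _)

end L1

theorem LinearMap.pi_apply_eq_sum_univₛₗ {A B Q J : Type*} [Semiring A] [Semiring B]
    [AddCommMonoid Q] [Module B Q] [Fintype J] [DecidableEq J] (ι : A →+* B)
    (f : (J → A) →ₛₗ[ι] Q) (y : J → A) : f y = ∑ j, ι (y j) • f (Pi.single j 1) := by
  conv_lhs => rw [pi_eq_sum_univ' y]
  simp only [map_sum, map_smulₛₗ]

section FillingNorm

variable {Γ : Type*} [Monoid Γ] (ν : RingNorm R) {Λ : Type*} [Fintype Λ]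
  {P : Type*} [AddCommGroup P] [Module (MonoidAlgebra R Γ) P]
  (ρ : (Λ → MonoidAlgebra R Γ) →ₗ[MonoidAlgebra R Γ] P)

theorem fillingNorm_nonneg (p : P) : 0 ≤ fillingNorm ν ρ p :=
  Real.sInf_nonneg fun _ ⟨x, _, hx⟩ => hx ▸ l1Free_nonneg ν x

theorem fillingNorm_le_l1Free {x : Λ → MonoidAlgebra R Γ} {p : P} (h : ρ x = p) :
    fillingNorm ν ρ p ≤ l1Free ν x :=
  csInf_le ⟨0, fun _ ⟨y, _, hy⟩ => hy ▸ l1Free_nonneg ν y⟩ ⟨x, h, rfl⟩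

theorem le_mul_fillingNorm (hρ : Function.Surjective ρ) {p : P} {c K : ℝ} (hK : 0 ≤ K)
    (h : ∀ x, ρ x = p → c ≤ K * l1Free ν x) : c ≤ K * fillingNorm ν ρ p := by
  rw [fillingNorm, ← smul_eq_mul, ← Real.sInf_smul_of_nonneg hK]
  obtain ⟨x, hx⟩ := hρ p
  refine le_csInf ⟨_, Set.smul_mem_smul_set ⟨x, hx, rfl⟩⟩ ?_
  rintro _ ⟨_, ⟨y, hy, rfl⟩, rfl⟩
  exact h y hy

variable {Γ' : Type*} [Monoid Γ'] (ι : MonoidAlgebra R Γ' →+* MonoidAlgebra R Γ)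

theorem exists_fillingNorm_sum_smul_le (hι : ∀ b, l1GroupRing ν (ι b) ≤ l1GroupRing ν b)
    (hρ : Function.Surjective ρ) {J : Type*} [Fintype J] (w : J → P) :
    ∃ C, 0 ≤ C ∧ ∀ c : J → MonoidAlgebra R Γ',
      fillingNorm ν ρ (∑ j, ι (c j) • w j) ≤ C * l1Free ν c := by
  choose x hx using fun j => hρ (w j)
  refine ⟨∑ j, l1Free ν (x j), Finset.sum_nonneg fun j _ => l1Free_nonneg ν (x j), fun c => ?_⟩
  have hρx : ρ (∑ j, ι (c j) • x j) = ∑ j, ι (c j) • w j := by simp only [map_sum, map_smul, hx]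
  exact (fillingNorm_le_l1Free ν ρ hρx).trans <|
    l1Free_sum_smul_le ν _ _ fun j => (hι (c j)).trans (l1GroupRing_le_l1Free ν c j)

theorem exists_fillingNorm_map_le (hι : ∀ b, l1GroupRing ν (ι b) ≤ l1GroupRing ν b)
    (hρ : Function.Surjective ρ) {Λ' : Type*} [Fintype Λ'] {P' : Type*} [AddCommGroup P']
    [Module (MonoidAlgebra R Γ') P'] {ρ' : (Λ' → MonoidAlgebra R Γ') →ₗ[MonoidAlgebra R Γ'] P'}
    (hρ' : Function.Surjective ρ') (f : P' →ₛₗ[ι] P) :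
    ∃ C, 0 ≤ C ∧ ∀ p, fillingNorm ν ρ (f p) ≤ C * fillingNorm ν ρ' p := by
  classical
  obtain ⟨C, hC, hbound⟩ :=
    exists_fillingNorm_sum_smul_le ν ρ ι hι hρ fun j => f (ρ' (Pi.single j 1))
  refine ⟨C, hC, fun p => le_mul_fillingNorm ν ρ' hρ' hC fun y hy => ?_⟩
  rw [← hy, ← LinearMap.comp_apply, LinearMap.pi_apply_eq_sum_univₛₗ ι]
  exact hbound y

theorem exists_l1Free_map_le_fillingNorm (hρ : Function.Surjective ρ) {Λ' : Type*} [Fintype Λ']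
    (s : P →ₗ[MonoidAlgebra R Γ] (Λ' → MonoidAlgebra R Γ)) :
    ∃ K, 0 ≤ K ∧ ∀ p, l1Free ν (s p) ≤ K * fillingNorm ν ρ p := by
  classical
  refine ⟨∑ j, l1Free ν (s (ρ (Pi.single j 1))),
    Finset.sum_nonneg fun j _ => l1Free_nonneg ν _, fun p => ?_⟩
  refine le_mul_fillingNorm ν ρ hρ (Finset.sum_nonneg fun j _ => l1Free_nonneg ν _) fun x hx => ?_
  rw [← hx, ← LinearMap.comp_apply, LinearMap.pi_apply_eq_sum_univₛₗ (RingHom.id _) (s ∘ₗ ρ)]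
  exact l1Free_sum_smul_le ν _ _ (l1GroupRing_le_l1Free ν x)

end FillingNorm

section RightCosets

variable {G : Type*} [Group G] (H : Subgroup G)

local notation "ι" => MonoidAlgebra.mapDomainRingHom R H.subtype

theorem mk_rightRel_eq_iff_mul_inv_out_mem {g : G} {q : Quotient (rightRel H)} :
    Quotient.mk _ g = q ↔ g * q.out⁻¹ ∈ H := by
  conv_lhs => rw [← q.out_eq]
  rw [Quotient.eq, rightRel_apply, ← inv_mem_iff, mul_inv_rev, inv_inv]

theorem exists_mk_rightRel_eq_of_mem_support_mul {c : MonoidAlgebra R H} {a : MonoidAlgebra R G}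
    {g : G} (hg : g ∈ (ι c * a).coeff.support) :
    ∃ v ∈ a.coeff.support, Quotient.mk (rightRel H) g = Quotient.mk _ v := by
  classical
  obtain ⟨u, hu, v, hv, rfl⟩ := Finset.mem_mul.mp (support_coeff_mul_subset _ _ hg)
  obtain ⟨h, -, rfl⟩ := Finset.mem_image.mp (Finsupp.mapDomain_support hu)
  refine ⟨v, hv, Quotient.sound (rightRel_apply.mpr ?_)⟩
  simp

theorem exists_finset_rightCosets_support {J Λ : Type*} [Fintype J] [Fintype Λ]
    (u : J → Λ → MonoidAlgebra R G) :
    ∃ F : Finset (Quotient (rightRel H)), ∀ (c : J → MonoidAlgebra R H) (i : Λ),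
      ∀ g ∈ ((∑ j, ι (c j) • u j) i).coeff.support, Quotient.mk _ g ∈ F := by
  classical
  refine ⟨Finset.univ.biUnion fun j => Finset.univ.biUnion fun i =>
    (u j i).coeff.support.image (Quotient.mk _), fun c i g hg => ?_⟩
  simp only [Finset.sum_apply, Pi.smul_apply, smul_eq_mul, coeff_sum] at hg
  obtain ⟨j, -, hj⟩ := Finsupp.mem_support_finsetSum g hg
  obtain ⟨v, hv, hgv⟩ := exists_mk_rightRel_eq_of_mem_support_mul H hj
  rw [hgv]
  exact Finset.mem_biUnion.mpr ⟨j, Finset.mem_univ _,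
    Finset.mem_biUnion.mpr ⟨i, Finset.mem_univ _, Finset.mem_image_of_mem _ hv⟩⟩

/-- The coordinate of `a` at `q` when `R[G]` is viewed as the free left `R[H]`-module on the
representatives `q.out` of the right cosets. -/
noncomputable def cosetComponent (a : MonoidAlgebra R G) (q : Quotient (rightRel H)) :
    MonoidAlgebra R H :=
  ofCoeff <| a.coeff.comapDomain (fun h : H => (h : G) * q.out)
    (mul_left_injective q.out |>.comp Subtype.val_injective).injOn

open scoped Classical in
theorem coeff_cosetComponent_mul_single (a : MonoidAlgebra R G)
    (q : Quotient (rightRel H)) (g : G) :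
    (ι (cosetComponent H a q) * single q.out 1).coeff g =
      if Quotient.mk _ g = q then a.coeff g else 0 := by
  rw [coeff_mul_single_apply, mul_one, mapDomainRingHom_apply]
  split_ifs with hg
  · have hmem := (mk_rightRel_eq_iff_mul_inv_out_mem H).mp hg
    rw [show g * q.out⁻¹ = H.subtype ⟨_, hmem⟩ from rfl]
    simp only [mapDomain, cosetComponent, coeff_ofCoeff]
    rw [Finsupp.mapDomain_apply H.subtype_injective, Finsupp.comapDomain_apply]
    simp
  · refine Finsupp.mapDomain_of_notMem_range _ _ ?_
    rintro ⟨h, hh⟩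
    exact hg ((mk_rightRel_eq_iff_mul_inv_out_mem H).mpr (hh ▸ h.2))

open scoped Classical in
theorem l1GroupRing_cosetComponent (ν : RingNorm R) (a : MonoidAlgebra R G)
    (q : Quotient (rightRel H)) :
    l1GroupRing ν (cosetComponent H a q) =
      ∑ g ∈ a.coeff.support with Quotient.mk _ g = q, ν (a.coeff g) := by
  rw [l1GroupRing_eq_sum]
  simp only [cosetComponent, coeff_ofCoeff, Finsupp.comapDomain_support,
    Finsupp.comapDomain_apply]
  rw [Finset.sum_preimage' (fun h : H => (h : G) * q.out) _ _ fun g => ν (a.coeff g)]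
  refine Finset.sum_congr (Finset.filter_congr fun g _ => ?_) fun _ _ => rfl
  rw [mk_rightRel_eq_iff_mul_inv_out_mem]
  exact ⟨fun ⟨h, hh⟩ => by simp [← hh], fun hg => ⟨⟨_, hg⟩, by simp⟩⟩

variable {H}

theorem sum_cosetComponent_mul_single {a : MonoidAlgebra R G}
    {F : Finset (Quotient (rightRel H))}
    (hF : ∀ g ∈ a.coeff.support, Quotient.mk _ g ∈ F) :
    ∑ q ∈ F, ι (cosetComponent H a q) * single q.out 1 = a := by
  ext g
  simp only [coeff_sum, Finsupp.finsetSum_apply, coeff_cosetComponent_mul_single]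
  classical
  rw [Finset.sum_ite_eq]
  split_ifs with hg
  · rfl
  · exact (Finsupp.notMem_support_iff.mp (mt (hF g) hg)).symm

theorem sum_l1GroupRing_cosetComponent (ν : RingNorm R) {a : MonoidAlgebra R G}
    {F : Finset (Quotient (rightRel H))}
    (hF : ∀ g ∈ a.coeff.support, Quotient.mk _ g ∈ F) :
    ∑ q ∈ F, l1GroupRing ν (cosetComponent H a q) = l1GroupRing ν a := by
  classical
  simp only [l1GroupRing_cosetComponent]
  exact Finset.sum_fiberwise_of_maps_to hF _

end RightCosets

section Retract

variable {G : Type*} [Group G] {H : Subgroup G} (ν : RingNorm R)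
  {M : Type*} [AddCommGroup M] [Module (MonoidAlgebra R G) M] [Module (MonoidAlgebra R H) M]
  {P : Type*} [AddCommGroup P] [Module (MonoidAlgebra R H) P]
  {ΛP : Type*} [Fintype ΛP] {ρP : (ΛP → MonoidAlgebra R H) →ₗ[MonoidAlgebra R H] P}

local notation "ι" => MonoidAlgebra.mapDomainRingHom R H.subtype

theorem exists_fillingNorm_map_sum_smul_le_of_mem_cosets
    (hsmul : ∀ (b : MonoidAlgebra R H) (m : M), b • m = ι b • m)
    (hρP : Function.Surjective ρP) (π : M →ₗ[MonoidAlgebra R H] P) {Λ : Type*} [Fintype Λ]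
    (m : Λ → M) (F : Finset (Quotient (rightRel H))) :
    ∃ C, 0 ≤ C ∧ ∀ z : Λ → MonoidAlgebra R G,
      (∀ i, ∀ g ∈ (z i).coeff.support, Quotient.mk _ g ∈ F) →
        fillingNorm ν ρP (π (∑ i, z i • m i)) ≤ C * l1Free ν z := by
  obtain ⟨C, hC, hbound⟩ := exists_fillingNorm_sum_smul_le ν ρP (RingHom.id _) (fun _ => le_rfl)
    hρP fun iq : Λ × F => π (single (iq.2 : Quotient (rightRel H)).out (1 : R) • m iq.1)
  refine ⟨C, hC, fun z hz => ?_⟩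
  let c : Λ × F → MonoidAlgebra R H := fun iq => cosetComponent H (z iq.1) iq.2
  have hπz : π (∑ i, z i • m i) =
      ∑ iq, c iq • π (single (iq.2 : Quotient (rightRel H)).out (1 : R) • m iq.1) := by
    rw [Fintype.sum_prod_type, map_sum]
    refine Finset.sum_congr rfl fun i _ => ?_
    conv_lhs => rw [← sum_cosetComponent_mul_single (hz i)]
    rw [Finset.sum_smul, map_sum, ← Finset.sum_coe_sort F]
    refine Finset.sum_congr rfl fun q _ => ?_
    rw [mul_smul, ← hsmul, map_smul]
  have hc : l1Free ν c = l1Free ν z := by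
    rw [l1Free, Fintype.sum_prod_type]
    exact Finset.sum_congr rfl fun i _ =>
      (Finset.sum_coe_sort F _).trans (sum_l1GroupRing_cosetComponent ν (hz i))
  rw [hπz, ← hc]
  exact hbound c

theorem exists_fillingNorm_le_fillingNorm_of_retract [Module.Projective (MonoidAlgebra R G) M]
    {ΛM : Type*} [Fintype ΛM] {ρM : (ΛM → MonoidAlgebra R G) →ₗ[MonoidAlgebra R G] M}
    (hρM : Function.Surjective ρM) (hρP : Function.Surjective ρP)
    (hsmul : ∀ (b : MonoidAlgebra R H) (m : M), b • m = ι b • m)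
    (j : P →ₛₗ[ι] M) (π : M →ₗ[MonoidAlgebra R H] P) (hπ : ∀ p, π (j p) = p) :
    ∃ C, 0 ≤ C ∧ ∀ p, fillingNorm ν ρP p ≤ C * fillingNorm ν ρM (j p) := by
  classical
  obtain ⟨s, hs⟩ := Module.projective_lifting_property ρM LinearMap.id hρM
  obtain ⟨K, hK, hsK⟩ := exists_l1Free_map_le_fillingNorm ν ρM hρM s
  obtain ⟨F, hF⟩ := exists_finset_rightCosets_support H fun k => s (j (ρP (Pi.single k 1)))
  obtain ⟨C, hC, hCF⟩ := exists_fillingNorm_map_sum_smul_le_of_mem_cosets ν hsmul hρP π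
    (fun i => ρM (Pi.single i 1)) F
  refine ⟨C * K, mul_nonneg hC hK, fun p => ?_⟩
  obtain ⟨y, rfl⟩ := hρP p
  have hsy : s (j (ρP y)) = ∑ k, ι (y k) • s (j (ρP (Pi.single k 1))) :=
    LinearMap.pi_apply_eq_sum_univₛₗ ι ((s.comp j).comp ρP) y
  have hρs : ∑ i, s (j (ρP y)) i • ρM (Pi.single i 1) = j (ρP y) := by
    simpa [← LinearMap.comp_apply ρM s, hs] using
      (LinearMap.pi_apply_eq_sum_univₛₗ (RingHom.id _) ρM (s (j (ρP y)))).symm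
  calc fillingNorm ν ρP (ρP y)
      = fillingNorm ν ρP (π (∑ i, s (j (ρP y)) i • ρM (Pi.single i 1))) := by rw [hρs, hπ]
    _ ≤ C * l1Free ν (s (j (ρP y))) := hCF _ (hsy ▸ hF y)
    _ ≤ C * (K * fillingNorm ν ρM (j (ρP y))) := mul_le_mul_of_nonneg_left (hsK _) hC
    _ = C * K * fillingNorm ν ρM (j (ρP y)) := (mul_assoc _ _ _).symm

end Retract

theorem exists_pos_inv_mul_le_and_le_mul {X : Type*} {f g : X → ℝ} (hf : ∀ x, 0 ≤ f x)
    (hg : ∀ x, 0 ≤ g x) {C₁ C₂ : ℝ} (h₁ : ∀ x, g x ≤ C₁ * f x) (h₂ : ∀ x, f x ≤ C₂ * g x) :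
    ∃ C : ℝ, 0 < C ∧ ∀ x, C⁻¹ * f x ≤ g x ∧ g x ≤ C * f x := by
  have hC : 0 < max 1 (max C₁ C₂) := lt_max_of_lt_left one_pos
  refine ⟨max 1 (max C₁ C₂), hC, fun x => ⟨?_, ?_⟩⟩
  · rw [inv_mul_le_iff₀ hC]
    exact (h₂ x).trans (mul_le_mul_of_nonneg_right (by simp) (hg x))
  · exact (h₁ x).trans (mul_le_mul_of_nonneg_right (by simp) (hf x))

theorem fillingNorm_summand_equiv_general {G : Type*} [Group G] (H : Subgroup G) (ν : RingNorm R)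
    {M : Type*} [AddCommGroup M] [Module (MonoidAlgebra R G) M]
    [Module.Projective (MonoidAlgebra R G) M]
    {ΛM : Type*} [Fintype ΛM]
    (ρM : (ΛM → MonoidAlgebra R G) →ₗ[MonoidAlgebra R G] M)
    (hρM : Function.Surjective ρM) :
    letI : Module (MonoidAlgebra R ↥H) M :=
      Module.compHom _ (MonoidAlgebra.mapDomainRingHom R H.subtype)
    ∀ (N N' : Submodule (MonoidAlgebra R ↥H) M), IsCompl N N' →
      ∀ {ΛN : Type*} [Fintype ΛN]
        (ρN : (ΛN → MonoidAlgebra R ↥H) →ₗ[MonoidAlgebra R ↥H] N),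
        Function.Surjective ρN → Module.Finite (MonoidAlgebra R ↥H) N →
        ∃ C : ℝ, 0 < C ∧ ∀ n : N,
          C⁻¹ * fillingNorm ν ρN n ≤ fillingNorm ν ρM (n : M) ∧
          fillingNorm ν ρM (n : M) ≤ C * fillingNorm ν ρN n := by
  intro N N' hNN' ΛN _ ρN hρN _
  let : Module (MonoidAlgebra R ↥H) M :=
    Module.compHom _ (MonoidAlgebra.mapDomainRingHom R H.subtype)
  let incl : N →ₛₗ[MonoidAlgebra.mapDomainRingHom R H.subtype] M :=
    { toFun := (↑), map_add' := fun _ _ => rfl, map_smul' := fun _ _ => rfl }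
  obtain ⟨C₁, -, h₁⟩ :=
    exists_fillingNorm_map_le ν ρM _ (l1GroupRing_mapDomain_le ν _) hρM hρN incl
  obtain ⟨C₂, -, h₂⟩ := exists_fillingNorm_le_fillingNorm_of_retract ν hρM hρN
    (fun _ _ => rfl) incl (Submodule.projectionOnto N N' hNN')
    (Submodule.projectionOnto_apply_left hNN')
  exact exists_pos_inv_mul_le_and_le_mul (fillingNorm_nonneg ν ρN)
    (fun _ => fillingNorm_nonneg ν ρM _) h₁ h₂

/-- Let `M` be a finitely generated projective `RG`-module with a filling norm, and `N` a
finitely generated `RH`-module with a filling norm which is an internal direct summand of `M`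
as an `RH`-module (`H ≤ G`). Then the filling norm of `N` and the restriction to `N` of the
filling norm of `M` are equivalent. -/
theorem fillingNorm_summand_equiv {G : Type*} [Group G] (H : Subgroup G) (ν : RingNorm R)
    {M : Type*} [AddCommGroup M] [Module (MonoidAlgebra R G) M]
    [Module.Finite (MonoidAlgebra R G) M] [Module.Projective (MonoidAlgebra R G) M]
    {ΛM : Type*} [Fintype ΛM]
    (ρM : (ΛM → MonoidAlgebra R G) →ₗ[MonoidAlgebra R G] M)
    (hρM : Function.Surjective ρM) :
    letI : Module (MonoidAlgebra R ↥H) M :=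
      Module.compHom _ (MonoidAlgebra.mapDomainRingHom R H.subtype)
    ∀ (N N' : Submodule (MonoidAlgebra R ↥H) M), IsCompl N N' →
      ∀ {ΛN : Type*} [Fintype ΛN]
        (ρN : (ΛN → MonoidAlgebra R ↥H) →ₗ[MonoidAlgebra R ↥H] N),
        Function.Surjective ρN → Module.Finite (MonoidAlgebra R ↥H) N →
        ∃ C : ℝ, 0 < C ∧ ∀ n : N,
          C⁻¹ * fillingNorm ν ρN n ≤ fillingNorm ν ρM (n : M) ∧
          fillingNorm ν ρM (n : M) ≤ C * fillingNorm ν ρN n :=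
  fillingNorm_summand_equiv_general H ν ρM hρM
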